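/- Let $a_1, b_1, \vartheta, \mu$ be elements of a field, and define recursively $c_\ell = \sum_{i=1}^{\ell-1} \binom{\ell}{i} a_i b_{\ell-i}$ with $a_\ell = \vartheta c_\ell$ and $b_\ell = \mu c_\ell$ for $\ell \ge 2$. Then for all $\ell \ge 2$, $a_\ell = \ell!\, a_1 b_1 \vartheta \sum_{j=0}^{\ell-2} N(\ell-1, j+1) (\mu a_1)^j (\vartheta b_1)^{\ell-2-j}$, where $N(m_1,m_2) = \frac{1}{m_1}\binom{m_1}{m_2}\binom{m_1}{m_2-1}$ are the Narayana numbers. -/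

import Mathlib

/-- The Narayana numbers `N(m₁, m₂) = (1/m₁) * C(m₁, m₂) * C(m₁, m₂-1)`
(the natural division is exact for `1 ≤ m₂ ≤ m₁`). -/
def narayana (m₁ m₂ : ℕ) : ℕ := m₁.choose m₂ * m₁.choose (m₂ - 1) / m₁

namespace NarAux

lemma absQ1 (m k : ℕ) : ((k : ℚ) + 1) * ((m+1).choose (k+1)) = ((m : ℚ) + 1) * (m.choose k) := by
  have h : (((m+1) * m.choose k : ℕ) : ℚ) = (((m+1).choose (k+1) * (k+1) : ℕ) : ℚ) := by
    exact_mod_cast congrArg (Nat.cast (R := ℚ)) (Nat.add_one_mul_choose_eq m k)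
  push_cast at h
  linarith [h]

lemma absQ2 (m k : ℕ) : ((m : ℚ) - k) * ((m+1).choose (k+1)) = ((m : ℚ) + 1) * (m.choose (k+1)) := by
  rcases le_or_gt k m with hk | hk
  · have h1 := Nat.choose_succ_right_eq (m+1) (k+1)
    have hsub : (m + 1) - (k + 1) = m - k := by omega
    rw [hsub] at h1
    have h : ((m+1) * m.choose (k+1) : ℕ) = ((m+1).choose (k+1) * (m - k) : ℕ) := by
      rw [Nat.add_one_mul_choose_eq m (k+1)]; exact h1
    have hc : (((m+1) * m.choose (k+1) : ℕ) : ℚ) = (((m+1).choose (k+1) * (m - k) : ℕ) : ℚ) :=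
      congrArg _ h
    push_cast [Nat.cast_sub hk] at hc
    linarith [hc]
  · have h1 : m.choose (k+1) = 0 := Nat.choose_eq_zero_of_lt (by omega)
    have h2 : (m+1).choose (k+1) = 0 := Nat.choose_eq_zero_of_lt (by omega)
    rw [h1, h2]; push_cast; ring

lemma dvd_key (s n k : ℕ) : n ∣ s * n.choose k * n.choose (k + s) := by
  rcases Nat.eq_zero_or_pos n with rfl | hn
  · rcases Nat.eq_zero_or_pos k with rfl | hk
    · rcases Nat.eq_zero_or_pos s with rfl | hs
      · simp
      · simp [Nat.choose_eq_zero_of_lt hs]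
    · simp [Nat.choose_eq_zero_of_lt hk]
  · rcases le_or_gt (k + s) n with hks | hks
    · obtain ⟨m, rfl⟩ : ∃ m, n = m + 1 := ⟨n - 1, by omega⟩
      set X := (m+1).choose k * (m+1).choose (k+s) with hX
      have h1 : (m+1) ∣ k * X := by
        rcases Nat.eq_zero_or_pos k with rfl | hk
        · simp
        · obtain ⟨k', rfl⟩ : ∃ k', k = k' + 1 := ⟨k - 1, by omega⟩
          have e : (k'+1) * (m+1).choose (k'+1) = (m+1) * m.choose k' := by
            rw [mul_comm, Nat.add_one_mul_choose_eq]
          refine ⟨m.choose k' * (m+1).choose (k'+1+s), ?_⟩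
          rw [hX, ← mul_assoc, e]; ring
      have h2 : (m+1) ∣ ((m+1) - (k+s)) * X := by
        have e2 : ((m+1) - (k+s)) * (m+1).choose (k+s) = (m+1) * m.choose (k+s) := by
          rw [mul_comm, Nat.add_one_mul_choose_eq, Nat.choose_succ_right_eq]
        refine ⟨m.choose (k+s) * (m+1).choose k, ?_⟩
        rw [hX]
        calc ((m+1) - (k+s)) * ((m+1).choose k * (m+1).choose (k+s))
            = (((m+1) - (k+s)) * (m+1).choose (k+s)) * (m+1).choose k := by ring
          _ = ((m+1) * m.choose (k+s)) * (m+1).choose k := by rw [e2]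
          _ = (m+1) * (m.choose (k+s) * (m+1).choose k) := by ring
      have h3 : (m+1) ∣ ((m+1) - s) * X := by
        have hk2 : k + ((m+1)-(k+s)) = (m+1) - s := by omega
        have := dvd_add h1 h2
        rwa [← add_mul, hk2] at this
      have h5 : (m+1) ∣ (m+1) * X - ((m+1)-s) * X := Nat.dvd_sub (dvd_mul_right _ _) h3
      have h6 : (m+1) * X - ((m+1)-s) * X = s * X := by
        rw [← Nat.sub_mul]; congr 1; omega
      rw [h6] at h5
      rwa [mul_assoc]
    · simp [Nat.choose_eq_zero_of_lt hks]

/-- `gnat s n k = s * C(n,k) * C(n,k+s) / n`: the coefficient of `x^k y^(n-s-k) z^n`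
in the `s`-th power of the generating function `F` with `F = z(1+xF)(1+yF)`. -/
def gnat (s n k : ℕ) : ℕ := s * n.choose k * n.choose (k + s) / n

lemma gnat_castQ (s n k : ℕ) (hn : n ≠ 0) :
    (gnat s n k : ℚ) = s * n.choose k * n.choose (k+s) / n := by
  rw [gnat, Nat.cast_div (dvd_key s n k) (by exact_mod_cast hn)]
  push_cast; ring

lemma gnat_eq_zero {s n k : ℕ} (h : n < k + s) : gnat s n k = 0 := by
  simp [gnat, Nat.choose_eq_zero_of_lt h]

lemma coreQ (m k s : ℕ) :
    ((m:ℚ)+1)*((s:ℚ)+1)*((m+2).choose (k+1))*((m+2).choose (k+s+2)) =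
    ((m:ℚ)+2)*( (s:ℚ)*((m+1).choose (k+1))*((m+1).choose (k+s+1))
      + ((s:ℚ)+1)*((m+1).choose k)*((m+1).choose (k+s+1))
      + ((s:ℚ)+1)*((m+1).choose (k+1))*((m+1).choose (k+s+2))
      + ((s:ℚ)+2)*((m+1).choose k)*((m+1).choose (k+s+2)) ) := by
  have e1 := absQ1 (m+1) k
  have e2 := absQ2 (m+1) k
  have e3 := absQ1 (m+1) (k+s+1)
  have e4 := absQ2 (m+1) (k+s+1)
  push_cast at e1 e2 e3 e4
  have hidx : k + s + 1 + 1 = k + s + 2 := by omega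
  rw [hidx] at e3 e4
  set P : ℚ := ((m+2).choose (k+1) : ℚ)
  set Q : ℚ := ((m+2).choose (k+s+2) : ℚ)
  set A : ℚ := ((m+1).choose (k+1) : ℚ)
  set A' : ℚ := ((m+1).choose k : ℚ)
  set B : ℚ := ((m+1).choose (k+s+2) : ℚ)
  set B' : ℚ := ((m+1).choose (k+s+1) : ℚ)
  have hne : ((m:ℚ)+2) ≠ 0 := by positivity
  have hA : A = ((((m:ℚ)+1)-(k:ℚ))*P)/((m:ℚ)+2) := by
    rw [eq_div_iff hne]; linear_combination -e2
  have hA' : A' = (((k:ℚ)+1)*P)/((m:ℚ)+2) := by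
    rw [eq_div_iff hne]; linear_combination -e1
  have hB : B = (((((m:ℚ)+1))-((k:ℚ)+(s:ℚ)+1))*Q)/((m:ℚ)+2) := by
    rw [eq_div_iff hne]; linear_combination -e4
  have hB' : B' = ((((k:ℚ)+(s:ℚ)+2))*Q)/((m:ℚ)+2) := by
    rw [eq_div_iff hne]; linear_combination -e3
  rw [hA, hA', hB, hB']
  field_simp
  ring

lemma coreQ0 (m s : ℕ) :
    ((m:ℚ)+1)*((s:ℚ)+1)*((m+2).choose (s+1)) =
    ((m:ℚ)+2)*( (s:ℚ)*((m+1).choose s) + ((s:ℚ)+1)*((m+1).choose (s+1)) ) := by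
  have e3 := absQ1 (m+1) s
  have e4 := absQ2 (m+1) s
  push_cast at e3 e4
  linear_combination (s:ℚ)*e3 + ((s:ℚ)+1)*e4

lemma TT1 (s m k : ℕ) :
    gnat (s+1) (m+2) (k+1)
      = gnat s (m+1) (k+1) + gnat (s+1) (m+1) k + gnat (s+1) (m+1) (k+1) + gnat (s+2) (m+1) k := by
  have h : ((gnat (s+1) (m+2) (k+1) : ℕ) : ℚ)
      = ((gnat s (m+1) (k+1) + gnat (s+1) (m+1) k + gnat (s+1) (m+1) (k+1) + gnat (s+2) (m+1) k : ℕ) : ℚ) := by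
    push_cast
    rw [gnat_castQ _ _ _ (by omega), gnat_castQ _ _ _ (by omega), gnat_castQ _ _ _ (by omega),
      gnat_castQ _ _ _ (by omega), gnat_castQ _ _ _ (by omega)]
    have h2 : ((m:ℚ)+2) ≠ 0 := by positivity
    have h1 : ((m:ℚ)+1) ≠ 0 := by positivity
    push_cast
    field_simp
    have hco := coreQ m k s
    push_cast at hco
    have hidx1 : k + 1 + (s + 1) = k + s + 2 := by omega
    have hidx2 : k + 1 + s = k + s + 1 := by omega
    have hidx3 : k + (s + 1) = k + s + 1 := by omega
    have hidx4 : k + (s + 2) = k + s + 2 := by omega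
    rw [hidx1, hidx2, hidx3, hidx4]
    linear_combination hco
  exact_mod_cast h

lemma TT0 (s m : ℕ) :
    gnat (s+1) (m+2) 0 = gnat s (m+1) 0 + gnat (s+1) (m+1) 0 := by
  have h : ((gnat (s+1) (m+2) 0 : ℕ) : ℚ)
      = ((gnat s (m+1) 0 + gnat (s+1) (m+1) 0 : ℕ) : ℚ) := by
    push_cast
    rw [gnat_castQ _ _ _ (by omega), gnat_castQ _ _ _ (by omega), gnat_castQ _ _ _ (by omega)]
    have h2 : ((m:ℚ)+2) ≠ 0 := by positivity
    have h1 : ((m:ℚ)+1) ≠ 0 := by positivity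
    push_cast
    field_simp
    have hco := coreQ0 m s
    push_cast at hco
    simp only [Nat.choose_zero_right, zero_add, Nat.cast_one]
    linear_combination hco
  exact_mod_cast h

variable {K : Type*} [Field K]

/-- homogeneous Narayana-type polynomial: coefficient of `z^n` in `F^s`, evaluated at `x, y`. -/
def QK (x y : K) (s n : ℕ) : K := ∑ k ∈ Finset.range (n+1), (gnat s n k : K) * x^k * y^(n - s - k)

lemma QK_zero_s (x y : K) (n : ℕ) : QK x y 0 n = 0 := by
  simp [QK, gnat]

lemma QK_zero_of_lt (x y : K) {s n : ℕ} (h : n < s) : QK x y s n = 0 := by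
  unfold QK
  refine Finset.sum_eq_zero fun k _ => ?_
  rw [gnat_eq_zero (by omega)]
  simp

lemma QK_one_one (x y : K) : QK x y 1 1 = 1 := by
  rw [QK]
  rw [Finset.sum_range_succ, Finset.sum_range_succ, Finset.sum_range_zero]
  norm_num [gnat]

lemma TTK (x y : K) (s m : ℕ) :
    QK x y (s+1) (m+2)
      = QK x y s (m+1) + (x+y) * QK x y (s+1) (m+1) + x*y*QK x y (s+2) (m+1) := by
  set C1 : K := ∑ k ∈ Finset.range (m+2), (gnat s (m+1) (k+1) : K) * x^(k+1) * y^(m-s-k) with hC1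
  set C2 : K := ∑ k ∈ Finset.range (m+2), (gnat (s+1) (m+1) k : K) * x^(k+1) * y^(m-s-k) with hC2
  set C3 : K := ∑ k ∈ Finset.range (m+2), (gnat (s+1) (m+1) (k+1) : K) * x^(k+1) * y^(m-s-k) with hC3
  set C4 : K := ∑ k ∈ Finset.range (m+2), (gnat (s+2) (m+1) k : K) * x^(k+1) * y^(m-s-k) with hC4
  have hLHS : QK x y (s+1) (m+2) = C1 + C2 + C3 + C4
      + ((gnat s (m+1) 0 : K) * y^(m+1-s) + (gnat (s+1) (m+1) 0 : K) * y^(m+1-s)) := by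
    rw [QK, show m + 2 + 1 = (m+2)+1 from rfl,
      Finset.sum_range_succ' (fun k => (gnat (s+1) (m+2) k : K) * x^k * y^(m+2-(s+1)-k)) (m+2)]
    have hterm : ∀ k ∈ Finset.range (m+2),
        (gnat (s+1) (m+2) (k+1) : K) * x^(k+1) * y^(m+2-(s+1)-(k+1))
        = (gnat s (m+1) (k+1) : K) * x^(k+1) * y^(m-s-k)
          + (gnat (s+1) (m+1) k : K) * x^(k+1) * y^(m-s-k)
          + (gnat (s+1) (m+1) (k+1) : K) * x^(k+1) * y^(m-s-k)
          + (gnat (s+2) (m+1) k : K) * x^(k+1) * y^(m-s-k) := by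
      intro k _
      rw [show m+2-(s+1)-(k+1) = m-s-k by omega, TT1 s m k]
      push_cast
      ring
    rw [Finset.sum_congr rfl hterm]
    rw [Finset.sum_add_distrib, Finset.sum_add_distrib, Finset.sum_add_distrib]
    rw [show m+2-(s+1)-0 = m+1-s by omega, TT0 s m]
    push_cast
    ring
  have hC1' : C1 = ∑ k ∈ Finset.range (m+1), (gnat s (m+1) (k+1) : K) * x^(k+1) * y^(m-s-k) := by
    rw [hC1, Finset.sum_range_succ, gnat_eq_zero (show m+1 < (m+1+1) + s by omega)]
    simp
  have hR1 : QK x y s (m+1) = C1 + (gnat s (m+1) 0 : K) * y^(m+1-s) := by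
    rw [QK, Finset.sum_range_succ' (fun k => (gnat s (m+1) k : K) * x^k * y^(m+1-s-k)) (m+1),
      hC1']
    rw [Finset.sum_congr rfl (fun k (_ : k ∈ Finset.range (m+1)) => by
      rw [show m+1-s-(k+1) = m-s-k by omega])]
    simp
  have hR2 : x * QK x y (s+1) (m+1) = C2 := by
    rw [QK, Finset.mul_sum, hC2]
    refine Finset.sum_congr rfl fun k _ => ?_
    rw [show m+1-(s+1)-k = m-s-k by omega]
    ring
  have hR3 : y * QK x y (s+1) (m+1) = C3 + (gnat (s+1) (m+1) 0 : K) * y^(m+1-s) := by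
    have step1 : y * QK x y (s+1) (m+1)
        = ∑ k ∈ Finset.range (m+2), (gnat (s+1) (m+1) k : K) * x^k * y^(m+1-s-k) := by
      rw [QK, Finset.mul_sum]
      refine Finset.sum_congr rfl fun k _ => ?_
      rcases le_or_gt (k + (s+1)) (m+1) with h | h
      · rw [show m+1-s-k = (m+1-(s+1)-k) + 1 by omega]
        ring
      · rw [gnat_eq_zero h]
        push_cast
        ring
    have hC3' : C3 = ∑ k ∈ Finset.range (m+1), (gnat (s+1) (m+1) (k+1) : K) * x^(k+1) * y^(m-s-k) := by
      rw [hC3, Finset.sum_range_succ, gnat_eq_zero (show m+1 < (m+1+1) + (s+1) by omega)]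
      simp
    rw [step1,
      Finset.sum_range_succ' (fun k => (gnat (s+1) (m+1) k : K) * x^k * y^(m+1-s-k)) (m+1),
      hC3']
    rw [Finset.sum_congr rfl (fun k (_ : k ∈ Finset.range (m+1)) => by
      rw [show m+1-s-(k+1) = m-s-k by omega])]
    simp
  have hR4 : x * y * QK x y (s+2) (m+1) = C4 := by
    rw [QK, Finset.mul_sum, hC4]
    refine Finset.sum_congr rfl fun k _ => ?_
    rcases le_or_gt (k + (s+2)) (m+1) with h | h
    · rw [show m-s-k = (m+1-(s+2)-k) + 1 by omega]
      ring
    · rw [gnat_eq_zero h]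
      push_cast
      ring
  rw [hLHS, hR1, add_mul, hR2, hR3, hR4]
  ring

lemma convK (x y : K) : ∀ m s r, 1 ≤ s → 1 ≤ r →
    (∑ i ∈ Finset.Ico 1 m, QK x y s i * QK x y r (m - i)) = QK x y (s+r) m := by
  intro m
  induction m using Nat.strong_induction_on with
  | _ m IH =>
  rcases m with _ | m
  · intro s r hs hr
    simp [QK_zero_of_lt x y (show 0 < s + r by omega)]
  rcases m with _ | M
  · intro s r hs hr
    simp [QK_zero_of_lt x y (show 1 < s + r by omega)]
  intro s r hs hr
  obtain ⟨s', rfl⟩ : ∃ s', s = s' + 1 := ⟨s - 1, by omega⟩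
  rw [Finset.sum_eq_sum_Ico_succ_bot (show 1 < M+2 by omega)]
  rw [Finset.sum_Ico_eq_sum_range, show M+2-2 = M by omega]
  have hterm : ∀ i ∈ Finset.range M,
      QK x y (s'+1) (2+i) * QK x y r (M+2-(2+i))
      = QK x y s' (i+1) * QK x y r (M+1-(i+1))
        + (x+y) * (QK x y (s'+1) (i+1) * QK x y r (M+1-(i+1)))
        + x*y*(QK x y (s'+2) (i+1) * QK x y r (M+1-(i+1))) := by
    intro i _
    rw [show 2+i = i+2 by omega, show M+2-(i+2) = M+1-(i+1) by omega, TTK]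
    ring
  rw [Finset.sum_congr rfl hterm, Finset.sum_add_distrib, Finset.sum_add_distrib,
    ← Finset.mul_sum, ← Finset.mul_sum]
  have conv1 : ∀ t : ℕ, (∑ i ∈ Finset.range M, QK x y t (i+1) * QK x y r (M+1-(i+1)))
      = ∑ j ∈ Finset.Ico 1 (M+1), QK x y t j * QK x y r (M+1-j) := by
    intro t
    rw [Finset.sum_Ico_eq_sum_range, show M+1-1 = M by omega]
    exact Finset.sum_congr rfl fun i _ => by rw [show 1+i = i+1 by omega]
  rw [conv1 s', conv1 (s'+1), conv1 (s'+2)]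
  rw [IH (M+1) (by omega) (s'+1) r (by omega) hr,
    IH (M+1) (by omega) (s'+2) r (by omega) hr]
  rcases Nat.eq_zero_or_pos s' with rfl | hs'
  · have h0 : (∑ j ∈ Finset.Ico 1 (M+1), QK x y 0 j * QK x y r (M+1-j)) = 0 :=
      Finset.sum_eq_zero fun j _ => by rw [QK_zero_s]; ring
    rw [h0, QK_one_one, show M+2-1 = M+1 by omega, one_mul]
    rw [show 0+2+r = r+2 by omega, show 0+1+r = r+1 by omega]
    have hT := TTK x y r M
    rw [show M+2 = M+1+1 by omega] at hT
    rw [hT]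
    ring
  · obtain ⟨s'', rfl⟩ : ∃ s'', s' = s'' + 1 := ⟨s' - 1, by omega⟩
    rw [IH (M+1) (by omega) (s''+1) r (by omega) hr]
    rw [QK_zero_of_lt x y (show 1 < s''+1+1 by omega), zero_mul, zero_add]
    rw [show s''+1+r = s''+r+1 by omega, show s''+1+1+r = s''+r+1+1 by omega,
      show s''+1+2+r = s''+r+1+2 by omega]
    have hT := TTK x y (s''+r+1) M
    rw [show M+2 = M+1+1 by omega] at hT
    rw [hT]

end NarAux

open NarAux

theorem closed_form_recursion {K : Type*} [Field K]
    (a b c : ℕ → K) (θ μ : K)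
    (hc : ∀ ℓ, 2 ≤ ℓ → c ℓ = ∑ i ∈ Finset.Ico 1 ℓ, (ℓ.choose i : K) * a i * b (ℓ - i))
    (ha : ∀ ℓ, 2 ≤ ℓ → a ℓ = θ * c ℓ)
    (hb : ∀ ℓ, 2 ≤ ℓ → b ℓ = μ * c ℓ) :
    ∀ ℓ, 2 ≤ ℓ →
      a ℓ = (ℓ.factorial : K) * a 1 * b 1 * θ *
        ∑ j ∈ Finset.range (ℓ - 1),
          (narayana (ℓ - 1) (j + 1) : K) * (μ * a 1) ^ j * (θ * b 1) ^ (ℓ - 2 - j) := by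
  intro ℓ hℓ
  set x : K := μ * a 1 with hx
  set y : K := θ * b 1 with hy
  have main : ∀ n, 2 ≤ n → c n = (n.factorial : K) * a 1 * b 1 * QK x y 1 (n-1) := by
    intro n
    induction n using Nat.strong_induction_on with
    | _ n IH =>
    intro hn
    rcases eq_or_lt_of_le hn with h2 | h3
    · -- n = 2
      subst h2
      rw [hc 2 le_rfl]
      rw [show Finset.Ico 1 2 = {1} from rfl]
      rw [Finset.sum_singleton]
      rw [show (2:ℕ)-1 = 1 from rfl, QK_one_one]
      norm_num [Nat.factorial]
    · -- n ≥ 3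
      obtain ⟨L, rfl⟩ : ∃ L, n = L + 3 := ⟨n - 3, by omega⟩
      rw [hc (L+3) hn]
      rw [Finset.sum_eq_sum_Ico_succ_bot (show 1 < L+3 by omega)]
      rw [show L+3 = (L+2)+1 from rfl, Finset.sum_Ico_succ_top (show 2 ≤ L+2 by omega)]
      -- the three pieces
      have hbot : ((L+3).choose 1 : K) * a 1 * b ((L+2)+1 - 1)
          = ((L+3).factorial : K) * a 1 * b 1 * (x * QK x y 1 (L+1)) := by
        rw [show (L+2)+1-1 = L+2 by omega, hb (L+2) (by omega), IH (L+2) (by omega) (by omega),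
          show L+2-1 = L+1 by omega, Nat.choose_one_right]
        have hfac : (((L+3).factorial : ℕ) : K) = ((L+3 : ℕ) : K) * (((L+2).factorial : ℕ) : K) := by
          exact_mod_cast congrArg (Nat.cast (R := K)) (Nat.factorial_succ (L+2))
        rw [hx]
        push_cast at hfac ⊢
        linear_combination (-((a 1)^2 * b 1 * μ * QK x y 1 (L+1))) * hfac
      have htop : ((L+2+1).choose (L+2) : K) * a (L+2) * b (L+2+1 - (L+2))
          = ((L+3).factorial : K) * a 1 * b 1 * (y * QK x y 1 (L+1)) := by
        rw [show L+2+1-(L+2) = 1 by omega, ha (L+2) (by omega), IH (L+2) (by omega) (by omega),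
          show L+2-1 = L+1 by omega, Nat.choose_succ_self_right]
        have hfac : (((L+3).factorial : ℕ) : K) = ((L+3 : ℕ) : K) * (((L+2).factorial : ℕ) : K) := by
          exact_mod_cast congrArg (Nat.cast (R := K)) (Nat.factorial_succ (L+2))
        rw [hy]
        push_cast at hfac ⊢
        linear_combination (-(a 1 * (b 1)^2 * θ * QK x y 1 (L+1))) * hfac
      have hmid : ∀ i ∈ Finset.Ico 2 (L+2), ((L+3).choose i : K) * a i * b ((L+2)+1 - i)
          = ((L+3).factorial : K) * a 1 * b 1 *
            (x * y * (QK x y 1 (i-1) * QK x y 1 (L+2-i))) := by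
        intro i hi
        rw [Finset.mem_Ico] at hi
        rw [ha i (by omega), hb ((L+2)+1-i) (by omega), IH i (by omega) (by omega),
          IH ((L+2)+1-i) (by omega) (by omega), show (L+2)+1-i-1 = L+2-i by omega]
        have hfac : (((L+3).choose i : ℕ) : K) * ((i.factorial : ℕ) : K)
            * ((((L+3)-i).factorial : ℕ) : K) = (((L+3).factorial : ℕ) : K) := by
          exact_mod_cast congrArg (Nat.cast (R := K))
            (Nat.choose_mul_factorial_mul_factorial (show i ≤ L+3 by omega))
        rw [show (L+2)+1-i = (L+3)-i by omega] at *
        rw [hx, hy]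
        linear_combination (θ * μ * (a 1)^2 * (b 1)^2 * QK x y 1 (i-1) * QK x y 1 (L+2-i)) * hfac
      rw [hbot, htop, Finset.sum_congr rfl hmid]
      rw [← Finset.mul_sum, ← Finset.mul_sum]
      have hconv : (∑ i ∈ Finset.Ico 2 (L+2), QK x y 1 (i-1) * QK x y 1 (L+2-i))
          = QK x y 2 (L+1) := by
        have : (∑ i ∈ Finset.Ico 2 (L+2), QK x y 1 (i-1) * QK x y 1 (L+2-i))
            = ∑ j ∈ Finset.Ico 1 (L+1), QK x y 1 j * QK x y 1 (L+1-j) := by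
          rw [Finset.sum_Ico_eq_sum_range, Finset.sum_Ico_eq_sum_range,
            show L+2-2 = L by omega, show L+1-1 = L by omega]
          refine Finset.sum_congr rfl fun i _ => ?_
          rw [show 2+i-1 = 1+i by omega, show L+2-(2+i) = L+1-(1+i) by omega]
        rw [this, convK x y (L+1) 1 1 le_rfl le_rfl]
      rw [hconv]
      rw [show L+2+1 = L+3 by omega, show L+3-1 = L+2 by omega]
      have hT := TTK x y 0 L
      norm_num at hT
      rw [QK_zero_s] at hT
      rw [hT]
      ring
  -- finish
  rw [ha ℓ hℓ, main ℓ hℓ]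
  obtain ⟨n, rfl⟩ : ∃ n, ℓ = n + 2 := ⟨ℓ - 2, by omega⟩
  have hq : QK x y 1 (n+2-1) = ∑ j ∈ Finset.range (n+2-1),
      (narayana (n+2-1) (j+1) : K) * x^j * y^(n+2-2-j) := by
    rw [show n+2-1 = n+1 by omega, QK, Finset.sum_range_succ,
      gnat_eq_zero (show n+1 < (n+1)+1 by omega)]
    push_cast
    rw [zero_mul, zero_mul, add_zero]
    refine Finset.sum_congr rfl fun k hk => ?_
    have hnar : narayana (n+1) (k+1) = gnat 1 (n+1) k := by
      rw [narayana, gnat, show k+1-1 = k by omega]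
      congr 1
      ring
    rw [hnar]
  rw [hq]
  ring
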